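/- arXiv:1405.5580 — 6 statements merged into one kernel-verified Lean document; each statement's English description precedes it below -/
import Mathlib

section
/- Let c > 0, d ∈ ℝ, and let p, b : (0,1) → ℝ be bounded measurable functions with p(u) → 0 and b(u) → 0 as u → 0⁺ and 1 + p(u) > 0 for all u ∈ (0,1). Define s(u) = c(1+p(u))·exp(∫_u^1 b(t)/t dt) and Q(u) = d − s(u) + ∫_u^1 s(t)/t dt for u ∈ (0,1). Then for every x > 0: lim_{u→0⁺} (Q(xu) − Q(u)) / s(u) = −log x (the quotient being taken for u small enough that xu ∈ (0,1)). -/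
/-!
From the representation, `s t / s u = (1 + p t) / (1 + p u) * exp (∫ τ in t..u, b τ / τ)`, and
for `t` between `x u` and `u` the integral is at most `sup |b| * |log x|` over `(0, max 1 x * u]`.
Hence `s t / s u → 1` as `u → 0⁺`, uniformly in such `t`. Since
`(Q (x u) - Q u) / s u = 1 - s (x u) / s u + ∫ t in x u..u, (s t / s u) / t`,
and the last integral differs from `∫ t in x u..u, 1 / t = -log x` by at most
`sup |s t / s u - 1| * |log x|`, the quotient tends to `-log x`.
-/

open Filter Topology Set MeasureTheory Real

theorem tendsto_zero_of_forall_eventually_abs_le_mul {α : Type*} {l : Filter α} {g : α → ℝ}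
    (C : ℝ) (h : ∀ ε > 0, ∀ᶠ a in l, |g a| ≤ ε * C) : Tendsto g l (𝓝 0) := by
  rw [Metric.tendsto_nhds]
  intro ε hε
  have hC : 0 < |C| + 1 := by positivity
  filter_upwards [h (ε / (|C| + 1)) (div_pos hε hC)] with a ha
  rw [Real.dist_eq, sub_zero]
  calc |g a| ≤ ε / (|C| + 1) * |C| := ha.trans (by gcongr; exact le_abs_self C)
    _ < ε := by
      rw [div_mul_eq_mul_div, div_lt_iff₀ hC]
      linarith

theorem abs_log_div_le_of_mem_uIcc {x u t : ℝ} (hx : 0 < x) (hu : 0 < u)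
    (ht : t ∈ uIcc (x * u) u) : |log (u / t)| ≤ |log x| := by
  have ht0 : 0 < t := (lt_min (mul_pos hx hu) hu).trans_le ht.1
  rw [log_div hu.ne' ht0.ne']
  rcases le_total x 1 with h | h
  · rw [uIcc_of_le (mul_le_of_le_one_left hu.le h)] at ht
    have h1 := log_le_log (mul_pos hx hu) ht.1
    have h2 := log_le_log ht0 ht.2
    rw [log_mul hx.ne' hu.ne'] at h1
    rw [abs_of_nonpos (log_nonpos hx.le h), abs_of_nonneg (by linarith)]
    linarith
  · rw [uIcc_of_ge (le_mul_of_one_le_left hu.le h)] at ht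
    have h1 := log_le_log hu ht.1
    have h2 := log_le_log ht0 ht.2
    rw [log_mul hx.ne' hu.ne'] at h2
    rw [abs_of_nonneg (log_nonneg h), abs_of_nonpos (by linarith)]
    linarith

section IntegralBounds

variable {f : ℝ → ℝ}

theorem integrableOn_Ioo_div_of_abs_le {a b M : ℝ} (hf : Measurable f) (ha : 0 < a)
    (hM : ∀ t ∈ Ioo a b, |f t| ≤ M) : IntegrableOn (fun t => f t / t) (Ioo a b) := by
  refine Measure.integrableOn_of_bounded measure_Ioo_lt_top.ne
    (hf.div measurable_id).aestronglyMeasurable (M := M / a) ?_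
  filter_upwards [ae_restrict_mem measurableSet_Ioo] with t ht
  have ht0 : 0 < t := ha.trans ht.1
  rw [Real.norm_eq_abs, abs_div, abs_of_pos ht0]
  exact div_le_div₀ ((abs_nonneg _).trans (hM t ht)) (hM t ht) ha ht.1.le

theorem abs_integral_div_le_mul_abs_log {v w K : ℝ} (hv : 0 < v) (hw : 0 < w)
    (hK : ∀ τ ∈ uIoc v w, |f τ| ≤ K) : |∫ τ in v..w, f τ / τ| ≤ K * |log (w / v)| := by
  wlog hvw : v ≤ w generalizing v w
  · rw [intervalIntegral.integral_symm, abs_neg, ← inv_div, log_inv, abs_neg]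
    exact this hw hv (uIoc_comm v w ▸ hK) (le_of_not_ge hvw)
  have hinv : IntervalIntegrable (fun τ => K * τ⁻¹) volume v w :=
    (intervalIntegral.intervalIntegrable_inv (fun τ hτ => ((lt_min hv hw).trans_le hτ.1).ne')
      continuousOn_id).const_mul K
  calc |∫ τ in v..w, f τ / τ| ≤ ∫ τ in v..w, K * τ⁻¹ := by
        rw [← Real.norm_eq_abs]
        refine intervalIntegral.norm_integral_le_of_norm_le hvw
          (ae_of_all _ fun τ hτ => ?_) hinv
        rw [Real.norm_eq_abs, abs_div, abs_of_pos (hv.trans hτ.1), div_eq_mul_inv]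
        exact mul_le_mul_of_nonneg_right (hK τ (by rwa [uIoc_of_le hvw]))
          (inv_nonneg.2 (hv.trans hτ.1).le)
    _ = K * |log (w / v)| := by
        rw [intervalIntegral.integral_const_mul, integral_inv_of_pos hv hw,
          abs_of_nonneg (log_nonneg ((one_le_div hv).2 hvw))]

end IntegralBounds

/-- Pairs `(u, t)` with `u → 0⁺` and `t` between `x u` and `u`: a limit along this filter is a
limit as `u → 0⁺`, uniform in such `t`. -/
def scaleWindow (x : ℝ) : Filter (ℝ × ℝ) :=
  comap Prod.fst (𝓝[>] 0) ⊓ 𝓟 {q | q.2 ∈ uIcc (x * q.1) q.1}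

section ScaleWindow

variable {x : ℝ}

theorem tendsto_fst_scaleWindow : Tendsto Prod.fst (scaleWindow x) (𝓝[>] 0) :=
  tendsto_comap.mono_left inf_le_left

theorem tendsto_pair_mul_scaleWindow : Tendsto (fun u => (u, x * u)) (𝓝[>] 0) (scaleWindow x) :=
  tendsto_inf.2 ⟨tendsto_comap_iff.2 tendsto_id,
    tendsto_principal.2 (Eventually.of_forall fun _ => left_mem_uIcc)⟩

theorem eventually_mem_scaleWindow : ∀ᶠ q in scaleWindow x, q.2 ∈ uIcc (x * q.1) q.1 :=
  mem_inf_of_right (mem_principal_self _)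

theorem tendsto_snd_scaleWindow (hx : 0 < x) : Tendsto Prod.snd (scaleWindow x) (𝓝[>] 0) := by
  have hfst := tendsto_fst_scaleWindow (x := x)
  have hbounds : ∀ᶠ q in scaleWindow x, 0 < q.2 ∧ q.2 ≤ max x 1 * q.1 := by
    filter_upwards [hfst self_mem_nhdsWithin, eventually_mem_scaleWindow] with q hu ht
    refine ⟨(lt_min (mul_pos hx hu) hu).trans_le ht.1, ht.2.trans_eq ?_⟩
    rw [max_mul_of_nonneg _ _ (le_of_lt hu), one_mul]
  have hmax : Tendsto (fun q : ℝ × ℝ => max x 1 * q.1) (scaleWindow x) (𝓝 0) := by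
    simpa using (tendsto_nhdsWithin_iff.1 hfst).1.const_mul (max x 1)
  refine tendsto_nhdsWithin_iff.2 ⟨squeeze_zero' ?_ ?_ hmax, hbounds.mono fun q hq => hq.1⟩
  · exact hbounds.mono fun q hq => hq.1.le
  · exact hbounds.mono fun q hq => hq.2

theorem eventually_forall_uIcc_of_scaleWindow {P : ℝ → ℝ → Prop}
    (h : ∀ᶠ q in scaleWindow x, P q.1 q.2) :
    ∀ᶠ u in 𝓝[>] 0, ∀ t ∈ uIcc (x * u) u, P u t := by
  obtain ⟨U, hU, hsub⟩ := mem_comap.1 (mem_inf_principal.1 h)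
  filter_upwards [hU] with u hu t ht
  exact hsub (show (u, t) ∈ Prod.fst ⁻¹' U from hu) ht

end ScaleWindow

theorem tendsto_integral_div_div_of_tendsto_ratio {s : ℝ → ℝ} {x : ℝ} (hx : 0 < x)
    (hint : ∀ᶠ u in 𝓝[>] 0, IntervalIntegrable (fun t => s t / t) volume (x * u) u)
    (hs : Tendsto (fun q : ℝ × ℝ => s q.2 / s q.1) (scaleWindow x) (𝓝 1)) :
    Tendsto (fun u => (∫ t in x * u..u, s t / t) / s u) (𝓝[>] 0) (𝓝 (-log x)) := by
  rw [← tendsto_sub_nhds_zero_iff]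
  refine tendsto_zero_of_forall_eventually_abs_le_mul |log x| fun ε hε => ?_
  have hclose := eventually_forall_uIcc_of_scaleWindow
    (P := fun u t => |s t / s u - 1| < ε) (Metric.tendsto_nhds.1 hs ε hε)
  filter_upwards [hclose, hint, self_mem_nhdsWithin] with u hclose hint hu
  have hu : 0 < u := hu
  have hxu : 0 < x * u := mul_pos hx hu
  have hlog : ∫ t in x * u..u, t⁻¹ = -log x := by
    rw [integral_inv_of_pos hxu hu, div_mul_cancel_right₀ hu.ne', log_inv]
  have hinv : IntervalIntegrable (fun t : ℝ => t⁻¹) volume (x * u) u :=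
    intervalIntegral.intervalIntegrable_inv
      (fun τ hτ => ((lt_min hxu hu).trans_le hτ.1).ne') continuousOn_id
  calc |(∫ t in x * u..u, s t / t) / s u - -log x|
      = |∫ t in x * u..u, (s t / s u - 1) / t| := by
        rw [← hlog, ← intervalIntegral.integral_div,
          ← intervalIntegral.integral_sub (hint.div_const _) hinv]
        congr 2 with t
        ring
    _ ≤ ε * |log (u / (x * u))| :=
        abs_integral_div_le_mul_abs_log hxu hu fun τ hτ => (hclose τ (uIoc_subset_uIcc hτ)).le
    _ = ε * |log x| := by rw [div_mul_cancel_right₀ hu.ne', log_inv, abs_neg]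

theorem intervalIntegrable_div_one_of_abs_le {f : ℝ → ℝ} {M v : ℝ} (hf : Measurable f)
    (hM : ∀ t ∈ Ioo (0 : ℝ) 1, |f t| ≤ M) (hv : v ∈ Ioo (0 : ℝ) 1) :
    IntervalIntegrable (fun t => f t / t) volume v 1 :=
  (intervalIntegrable_iff_integrableOn_Ioo_of_le hv.2.le).2 <|
    integrableOn_Ioo_div_of_abs_le hf hv.1 fun t ht => hM t ⟨hv.1.trans ht.1, ht.2⟩

theorem continuousOn_integral_div_one_of_abs_le {f : ℝ → ℝ} {M v : ℝ} (hf : Measurable f)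
    (hM : ∀ t ∈ Ioo (0 : ℝ) 1, |f t| ≤ M) (hv : v ∈ Ioo (0 : ℝ) 1) :
    ContinuousOn (fun u => ∫ t in u..1, f t / t) (Icc v 1) := by
  have hint := intervalIntegrable_div_one_of_abs_le hf hM hv
  rw [intervalIntegrable_iff_integrableOn_Icc_of_le hv.2.le] at hint
  rw [← uIcc_of_le hv.2.le] at hint ⊢
  exact intervalIntegral.continuousOn_primitive_interval_left hint

section Representation

variable {c Mp Mb : ℝ} {p b s : ℝ → ℝ}

theorem tendsto_integral_div_scaleWindow {x : ℝ} (hx : 0 < x)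
    (hb0 : Tendsto b (𝓝[>] 0) (𝓝 0)) :
    Tendsto (fun q : ℝ × ℝ => ∫ τ in q.2..q.1, b τ / τ) (scaleWindow x) (𝓝 0) := by
  refine tendsto_zero_of_forall_eventually_abs_le_mul |log x| fun ε hε => ?_
  have hsmall : ∀ᶠ τ in 𝓝[>] 0, |b τ| < ε := by
    simpa [Real.dist_eq] using Metric.tendsto_nhds.1 hb0 ε hε
  obtain ⟨δ, hδ, hδsmall⟩ := mem_nhdsGT_iff_exists_Ioo_subset.1 hsmall
  filter_upwards [tendsto_fst_scaleWindow (Ioo_mem_nhdsGT hδ),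
    tendsto_snd_scaleWindow hx (Ioo_mem_nhdsGT hδ), eventually_mem_scaleWindow]
    with q hu ht hq
  calc |∫ τ in q.2..q.1, b τ / τ| ≤ ε * |log (q.1 / q.2)| :=
        abs_integral_div_le_mul_abs_log ht.1 hu.1 fun τ hτ =>
          (hδsmall (ordConnected_Ioo.uIcc_subset ht hu (uIoc_subset_uIcc hτ))).le
    _ ≤ ε * |log x| := by
        have := abs_log_div_le_of_mem_uIcc hx hu.1 hq
        gcongr

variable (hs : ∀ u ∈ Ioo (0 : ℝ) 1, s u = c * (1 + p u) * exp (∫ t in u..1, b t / t))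
include hs

theorem div_eq_mul_exp_integral_of_representation (hc : c ≠ 0) (hbm : Measurable b)
    (hMb : ∀ u ∈ Ioo (0 : ℝ) 1, |b u| ≤ Mb) {t u : ℝ} (ht : t ∈ Ioo (0 : ℝ) 1)
    (hu : u ∈ Ioo (0 : ℝ) 1) :
    s t / s u = (1 + p t) / (1 + p u) * exp (∫ τ in t..u, b τ / τ) := by
  have hsplit := intervalIntegral.integral_add_adjacent_intervals
    ((intervalIntegrable_div_one_of_abs_le hbm hMb ht).trans
      (intervalIntegrable_div_one_of_abs_le hbm hMb hu).symm)
    (intervalIntegrable_div_one_of_abs_le hbm hMb hu)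
  rw [hs t ht, hs u hu, ← hsplit, exp_add, mul_div_mul_comm, mul_div_mul_left _ _ hc,
    mul_div_cancel_right₀ _ (exp_pos _).ne']

theorem tendsto_ratio_scaleWindow_of_representation (hc : c ≠ 0) (hbm : Measurable b)
    (hMb : ∀ u ∈ Ioo (0 : ℝ) 1, |b u| ≤ Mb) (hp0 : Tendsto p (𝓝[>] 0) (𝓝 0))
    (hb0 : Tendsto b (𝓝[>] 0) (𝓝 0)) {x : ℝ} (hx : 0 < x) :
    Tendsto (fun q : ℝ × ℝ => s q.2 / s q.1) (scaleWindow x) (𝓝 1) := by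
  have hp1 : Tendsto (fun u => 1 + p u) (𝓝[>] 0) (𝓝 1) := by
    simpa using tendsto_const_nhds.add hp0
  have hexp :
      Tendsto (fun q : ℝ × ℝ => exp (∫ τ in q.2..q.1, b τ / τ)) (scaleWindow x) (𝓝 1) := by
    rw [← exp_zero]
    exact (continuous_exp.tendsto 0).comp (tendsto_integral_div_scaleWindow hx hb0)
  have hlim := ((hp1.comp (tendsto_snd_scaleWindow hx)).div
    (hp1.comp tendsto_fst_scaleWindow) one_ne_zero).mul hexp
  rw [div_one, one_mul] at hlim
  refine hlim.congr' ?_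
  filter_upwards [tendsto_fst_scaleWindow (Ioo_mem_nhdsGT one_pos),
    tendsto_snd_scaleWindow hx (Ioo_mem_nhdsGT one_pos)] with q hu ht
  exact (div_eq_mul_exp_integral_of_representation hs hc hbm hMb ht hu).symm

theorem intervalIntegrable_div_one_of_representation (hpm : Measurable p)
    (hMp : ∀ u ∈ Ioo (0 : ℝ) 1, |p u| ≤ Mp) (hbm : Measurable b)
    (hMb : ∀ u ∈ Ioo (0 : ℝ) 1, |b u| ≤ Mb) {v : ℝ} (hv : v ∈ Ioo (0 : ℝ) 1) :
    IntervalIntegrable (fun t => s t / t) volume v 1 := by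
  have hfactor : IntegrableOn (fun t => c * (1 + p t) / t) (Ioo v 1) := by
    refine integrableOn_Ioo_div_of_abs_le (M := |c| * (1 + Mp)) (by fun_prop) hv.1
      fun t ht => ?_
    rw [abs_mul]
    gcongr
    exact (abs_add_le _ _).trans (by simpa using hMp t ⟨hv.1.trans ht.1, ht.2⟩)
  rw [intervalIntegrable_iff_integrableOn_Ioo_of_le hv.2.le]
  have hexp : ContinuousOn (fun t => exp (∫ τ in t..1, b τ / τ)) (Icc v 1) :=
    continuous_exp.comp_continuousOn (continuousOn_integral_div_one_of_abs_le hbm hMb hv)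
  refine (hfactor.mul_continuousOn_of_subset hexp measurableSet_Ioo isCompact_Icc
    Ioo_subset_Icc_self).congr_fun (fun t ht => ?_) measurableSet_Ioo
  rw [hs t ⟨hv.1.trans ht.1, ht.2⟩]
  exact div_mul_eq_mul_div _ _ _

end Representation

theorem gumbel_first_order_from_representation_general
    (c d : ℝ) (hc : 0 < c) (p b : ℝ → ℝ)
    (hpm : Measurable p) (hbm : Measurable b)
    (hpb : ∃ M : ℝ, ∀ u ∈ Set.Ioo (0:ℝ) 1, |p u| ≤ M)
    (hbb : ∃ M : ℝ, ∀ u ∈ Set.Ioo (0:ℝ) 1, |b u| ≤ M)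
    (hp0 : Tendsto p (𝓝[>] 0) (𝓝 0))
    (hb0 : Tendsto b (𝓝[>] 0) (𝓝 0))
    (s Q : ℝ → ℝ)
    (hs : ∀ u ∈ Set.Ioo (0:ℝ) 1, s u = c * (1 + p u) * Real.exp (∫ t in u..1, b t / t))
    (hQ : ∀ u ∈ Set.Ioo (0:ℝ) 1, Q u = d - s u + ∫ t in u..1, s t / t)
    (x : ℝ) (hx : 0 < x) :
    Tendsto (fun u => (Q (x * u) - Q u) / s u) (𝓝[>] 0) (𝓝 (-Real.log x)) := by
  obtain ⟨Mp, hMp⟩ := hpb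
  obtain ⟨Mb, hMb⟩ := hbb
  have hint : ∀ {v}, v ∈ Ioo (0 : ℝ) 1 → IntervalIntegrable (fun t => s t / t) volume v 1 :=
    intervalIntegrable_div_one_of_representation hs hpm hMp hbm hMb
  have hratio := tendsto_ratio_scaleWindow_of_representation hs hc.ne' hbm hMb hp0 hb0 hx
  have hmul : Tendsto (fun u => x * u) (𝓝[>] 0) (𝓝[>] 0) :=
    (tendsto_snd_scaleWindow hx).comp tendsto_pair_mul_scaleWindow
  have hmem : ∀ᶠ u in 𝓝[>] (0 : ℝ), u ∈ Ioo (0 : ℝ) 1 ∧ x * u ∈ Ioo (0 : ℝ) 1 :=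
    Filter.Eventually.and (Ioo_mem_nhdsGT one_pos) (hmul (Ioo_mem_nhdsGT one_pos))
  have hJ := tendsto_integral_div_div_of_tendsto_ratio hx
    (hmem.mono fun u hu => (hint hu.2).trans (hint hu.1).symm) hratio
  have hlim : Tendsto (fun u => 1 - s (x * u) / s u + (∫ t in x * u..u, s t / t) / s u)
      (𝓝[>] 0) (𝓝 (-log x)) := by
    simpa using
      (tendsto_const_nhds (x := (1 : ℝ)).sub (hratio.comp tendsto_pair_mul_scaleWindow)).add hJ
  have hp_ne : ∀ᶠ u in 𝓝[>] (0 : ℝ), 1 + p u ≠ 0 := by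
    simpa using (tendsto_const_nhds (x := (1 : ℝ)).add hp0).eventually_ne (by norm_num)
  refine hlim.congr' ?_
  filter_upwards [hmem, hp_ne] with u ⟨hu, hxu⟩ hpu
  have hsu : s u ≠ 0 := by
    rw [hs u hu]
    exact mul_ne_zero (mul_ne_zero hc.ne' hpu) (exp_pos _).ne'
  rw [hQ _ hxu, hQ _ hu, ← intervalIntegral.integral_add_adjacent_intervals
    ((hint hxu).trans (hint hu).symm) (hint hu)]
  field_simp
  ring

/-- First-order Gumbel-domain limit from the de Haan representation. -/
theorem gumbel_first_order_from_representation
    (c d : ℝ) (hc : 0 < c) (p b : ℝ → ℝ)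
    (hpm : Measurable p) (hbm : Measurable b)
    (hpb : ∃ M : ℝ, ∀ u ∈ Set.Ioo (0:ℝ) 1, |p u| ≤ M)
    (hbb : ∃ M : ℝ, ∀ u ∈ Set.Ioo (0:ℝ) 1, |b u| ≤ M)
    (hp0 : Tendsto p (𝓝[>] 0) (𝓝 0))
    (hb0 : Tendsto b (𝓝[>] 0) (𝓝 0))
    (hppos : ∀ u ∈ Set.Ioo (0:ℝ) 1, 0 < 1 + p u)
    (s Q : ℝ → ℝ)
    (hs : ∀ u ∈ Set.Ioo (0:ℝ) 1, s u = c * (1 + p u) * Real.exp (∫ t in u..1, b t / t))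
    (hQ : ∀ u ∈ Set.Ioo (0:ℝ) 1, Q u = d - s u + ∫ t in u..1, s t / t)
    (x : ℝ) (hx : 0 < x) :
    Tendsto (fun u => (Q (x * u) - Q u) / s u) (𝓝[>] 0) (𝓝 (-Real.log x)) :=
  gumbel_first_order_from_representation_general c d hc p b hpm hbm hpb hbb hp0 hb0 s Q hs hQ x hx
end

section
/- Let c > 0 and let p, b : (0,1) → ℝ be bounded measurable functions with p(u) → 0 and b(u) → 0 as u → 0⁺ and 1 + p(u) > 0 for all u ∈ (0,1). Define s(u) = c(1+p(u))·exp(∫_u^1 b(t)/t dt) for u ∈ (0,1). Then for every fixed x > 0: lim_{u→0⁺} sup{ |s(v)/s(u) − 1| : v ∈ [min(ux,u), max(ux,u)] } = 0 (the supremum being taken for u small enough that ux ∈ (0,1)). -/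
open Filter Topology Set MeasureTheory intervalIntegral
open scoped Interval

/-! For `u, v ∈ (0, 1)` the constant `c` and the tail `∫_u^1` cancel:
`s v / s u = (1 + p v) / (1 + p u) · exp (∫_v^u b t / t dt)`.
Writing `v = u r` with `r` between `x` and `1`, both `p`-factors tend to `1`, and
`|∫_{ur}^u b t / t dt| ≤ sup_{t ≤ u max x 1} |b t| · |1 - x| / min x 1 → 0`,
uniformly in `r`. Hence `s (u r) / s u → 1` uniformly on `[[x, 1]]`,
and the supremum tends to `0`. -/

theorem TendstoUniformlyOn.tendsto_sSup_image_dist {ι α β : Type*} [PseudoMetricSpace β]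
    {F : ι → α → β} {f : α → β} {l : Filter ι} {S : Set α}
    (h : TendstoUniformlyOn F f l S) :
    Tendsto (fun i => sSup ((fun a => dist (F i a) (f a)) '' S)) l (𝓝 0) := by
  refine Metric.tendsto_nhds.2 fun ε hε => ?_
  filter_upwards [Metric.tendstoUniformlyOn_iff.1 h (ε / 2) (half_pos hε)] with i hi
  have hnonneg : 0 ≤ sSup ((fun a => dist (F i a) (f a)) '' S) :=
    Real.sSup_nonneg (by rintro _ ⟨a, -, rfl⟩; exact dist_nonneg)
  have hle : sSup ((fun a => dist (F i a) (f a)) '' S) ≤ ε / 2 :=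
    Real.sSup_le (by rintro _ ⟨a, ha, rfl⟩; exact (dist_comm (f a) _ ▸ hi a ha).le)
      (half_pos hε).le
  rw [Real.dist_eq, sub_zero, abs_of_nonneg hnonneg]
  linarith

theorem intervalIntegrable_div_of_abs_le {b : ℝ → ℝ} (hb : Measurable b) {M a c : ℝ}
    (ha : 0 < a) (hac : a ≤ c) (hM : ∀ t ∈ Ioo a c, |b t| ≤ M) :
    IntervalIntegrable (fun t => b t / t) volume a c := by
  rw [intervalIntegrable_iff_integrableOn_Ioo_of_le hac]
  refine Measure.integrableOn_of_bounded (M := M / a) measure_Ioo_lt_top.ne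
    (hb.div measurable_id).aestronglyMeasurable ?_
  rw [ae_restrict_iff' measurableSet_Ioo]
  filter_upwards with t ht
  rw [Real.norm_eq_abs, abs_div, abs_of_pos (ha.trans ht.1)]
  exact div_le_div₀ ((abs_nonneg _).trans (hM t ht)) (hM t ht) ha ht.1.le

theorem tendsto_integral_div_mul_prod_uIcc {b : ℝ → ℝ} (hb : Tendsto b (𝓝[>] 0) (𝓝 0))
    {x : ℝ} (hx : 0 < x) :
    Tendsto (fun q : ℝ × ℝ => ∫ t in q.1 * q.2..q.1, b t / t) (𝓝[>] 0 ×ˢ 𝓟 [[x, 1]])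
      (𝓝 0) := by
  set m := min x 1
  set M := max x 1
  have hm : 0 < m := lt_min hx one_pos
  have hM : 0 < M := lt_max_of_lt_right one_pos
  refine Metric.tendsto_nhds.2 fun ε hε => ?_
  set δ := ε * m / (|1 - x| + 1)
  have hδ : 0 < δ := by positivity
  obtain ⟨η, hη, hbη⟩ := mem_nhdsGT_iff_exists_Ioo_subset.1 (hb (Metric.ball_mem_nhds 0 hδ))
  filter_upwards [prod_mem_prod (Ioo_mem_nhdsGT (div_pos hη hM)) (mem_principal_self _)]
  rintro ⟨u, r⟩ ⟨⟨hu, huη⟩, hr⟩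
  dsimp only at hu huη hr
  obtain ⟨hmr, hrM⟩ : m ≤ r ∧ r ≤ M := hr
  have hbound : ∀ t ∈ Ι (u * r) u, ‖b t / t‖ ≤ δ / (u * m) := by
    rintro t ⟨hlt, hle⟩
    have hmt : u * m < t := lt_of_le_of_lt
      (le_min (by gcongr) (mul_le_of_le_one_right hu.le (min_le_right x 1))) hlt
    have htη : t < η := by
      refine hle.trans_lt (lt_of_le_of_lt (max_le (by gcongr) ?_) ((lt_div_iff₀ hM).1 huη))
      exact le_mul_of_one_le_right hu.le (le_max_right x 1)
    have ht : 0 < t := (mul_pos hu hm).trans hmt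
    have hbt : |b t| < δ := by simpa using hbη ⟨ht, htη⟩
    rw [Real.norm_eq_abs, abs_div, abs_of_pos ht]
    exact div_le_div₀ hδ.le hbt.le (mul_pos hu hm) hmt.le
  calc dist (∫ t in u * r..u, b t / t) 0 = ‖∫ t in u * r..u, b t / t‖ := dist_zero_right _
    _ ≤ δ / (u * m) * |u - u * r| := norm_integral_le_of_norm_le_const hbound
    _ ≤ δ / (u * m) * (u * |1 - x|) := by
      gcongr
      rw [← mul_one_sub, abs_mul, abs_of_pos hu]
      exact mul_le_mul_of_nonneg_left (abs_sub_right_of_mem_uIcc ⟨hmr, hrM⟩) hu.le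
    _ = δ * |1 - x| / m := by field_simp
    _ < ε := by
      rw [div_lt_iff₀ hm, div_mul_eq_mul_div, div_lt_iff₀ (by positivity)]
      nlinarith [mul_pos hε hm]

theorem ratio_eq_mul_exp_integral {c : ℝ} {p b s : ℝ → ℝ} (hbm : Measurable b) {M : ℝ}
    (hbb : ∀ u ∈ Ioo (0:ℝ) 1, |b u| ≤ M)
    (hs : ∀ u ∈ Ioo (0:ℝ) 1, s u = c * (1 + p u) * Real.exp (∫ t in u..1, b t / t))
    {u v : ℝ} (hu : u ∈ Ioo (0:ℝ) 1) (hv : v ∈ Ioo (0:ℝ) 1) :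
    s v / s u = c * (1 + p v) * Real.exp (∫ t in v..u, b t / t) / (c * (1 + p u)) := by
  have hint : ∀ w ∈ Ioo (0:ℝ) 1, IntervalIntegrable (fun t => b t / t) volume w 1 :=
    fun w hw => intervalIntegrable_div_of_abs_le hbm hw.1 hw.2.le
      fun t ht => hbb t ⟨hw.1.trans ht.1, ht.2⟩
  rw [hs v hv, hs u hu, ← integral_add_adjacent_intervals ((hint v hv).trans (hint u hu).symm)
    (hint u hu), Real.exp_add, ← mul_assoc]
  exact mul_div_mul_right _ _ (Real.exp_pos _).ne'

theorem tendstoUniformlyOn_ratio {c : ℝ} (hc : c ≠ 0) {p b s : ℝ → ℝ} (hbm : Measurable b)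
    {M : ℝ} (hbb : ∀ u ∈ Ioo (0:ℝ) 1, |b u| ≤ M)
    (hp0 : Tendsto p (𝓝[>] 0) (𝓝 0)) (hb0 : Tendsto b (𝓝[>] 0) (𝓝 0))
    (hs : ∀ u ∈ Ioo (0:ℝ) 1, s u = c * (1 + p u) * Real.exp (∫ t in u..1, b t / t))
    {x : ℝ} (hx : 0 < x) :
    TendstoUniformlyOn (fun u r => s (u * r) / s u) (fun _ => 1) (𝓝[>] 0) [[x, 1]] := by
  rw [tendstoUniformlyOn_iff_tendsto, ← Uniform.tendsto_nhds_right]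
  set l := 𝓝[>] (0:ℝ) ×ˢ 𝓟 [[x, 1]]
  have hfst : Tendsto Prod.fst l (𝓝[>] 0) := tendsto_fst
  have hsnd : ∀ᶠ q in l, min x 1 ≤ q.2 ∧ q.2 ≤ max x 1 :=
    tendsto_snd (mem_principal_self _)
  have hmul : Tendsto (fun q : ℝ × ℝ => q.1 * q.2) l (𝓝[>] 0) := by
    refine tendsto_nhdsWithin_iff.2
      ⟨(tendsto_nhds_of_tendsto_nhdsWithin hfst).zero_mul_isBoundedUnder_le
        (isBoundedUnder_of_eventually_le (a := max x 1) ?_), ?_⟩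
    · filter_upwards [hsnd] with q hq
      have hq0 : 0 < q.2 := (lt_min hx one_pos).trans_le hq.1
      simpa [abs_of_pos hq0] using hq.2
    · filter_upwards [hfst self_mem_nhdsWithin, hsnd] with q hq hq'
      exact mul_pos hq (lt_of_lt_of_le (lt_min hx one_pos) hq'.1)
  have hsmall : ∀ᶠ q in l, q.1 ∈ Ioo 0 1 ∧ q.1 * q.2 ∈ Ioo 0 1 :=
    (hfst.eventually (Ioo_mem_nhdsGT one_pos)).and (hmul.eventually (Ioo_mem_nhdsGT one_pos))
  have hlim := (((tendsto_const_nhds (x := c)).mul ((hp0.comp hmul).const_add 1)).mul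
    (tendsto_integral_div_mul_prod_uIcc hb0 hx).rexp).div
    ((tendsto_const_nhds (x := c)).mul ((hp0.comp hfst).const_add 1)) (by simpa using hc)
  simp only [add_zero, mul_one, Real.exp_zero, div_self hc] at hlim
  exact hlim.congr'
    (hsmall.mono fun q hq => (ratio_eq_mul_exp_integral hbm hbb hs hq.1 hq.2).symm)

theorem slowly_varying_uniform_ratio_general
    (c : ℝ) (hc : 0 < c) (p b : ℝ → ℝ)
    (hbm : Measurable b)
    (hbb : ∃ M : ℝ, ∀ u ∈ Set.Ioo (0:ℝ) 1, |b u| ≤ M)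
    (hp0 : Tendsto p (𝓝[>] 0) (𝓝 0))
    (hb0 : Tendsto b (𝓝[>] 0) (𝓝 0))
    (s : ℝ → ℝ)
    (hs : ∀ u ∈ Set.Ioo (0:ℝ) 1, s u = c * (1 + p u) * Real.exp (∫ t in u..1, b t / t))
    (x : ℝ) (hx : 0 < x) :
    Tendsto (fun u => sSup ((fun v => |s v / s u - 1|) ''
        Set.Icc (min (u * x) u) (max (u * x) u))) (𝓝[>] 0) (𝓝 0) := by
  obtain ⟨M, hM⟩ := hbb
  refine (tendstoUniformlyOn_ratio hc.ne' hbm hM hp0 hb0 hs hx).tendsto_sSup_image_dist.congr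
    fun u => ?_
  have hIcc : Icc (min (u * x) u) (max (u * x) u) = (u * ·) '' [[x, 1]] := by
    rw [image_const_mul_uIcc, mul_one]
    rfl
  simp only [hIcc, image_image, Real.dist_eq]

/-- Uniform ratio estimate (slow variation at 0) for the auxiliary function
`s(u) = c(1+p(u))·exp(∫_u^1 b(t)/t dt)` of the Karamata representation. -/
theorem slowly_varying_uniform_ratio
    (c : ℝ) (hc : 0 < c) (p b : ℝ → ℝ)
    (hpm : Measurable p) (hbm : Measurable b)
    (hpb : ∃ M : ℝ, ∀ u ∈ Set.Ioo (0:ℝ) 1, |p u| ≤ M)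
    (hbb : ∃ M : ℝ, ∀ u ∈ Set.Ioo (0:ℝ) 1, |b u| ≤ M)
    (hp0 : Tendsto p (𝓝[>] 0) (𝓝 0))
    (hb0 : Tendsto b (𝓝[>] 0) (𝓝 0))
    (hppos : ∀ u ∈ Set.Ioo (0:ℝ) 1, 0 < 1 + p u)
    (s : ℝ → ℝ)
    (hs : ∀ u ∈ Set.Ioo (0:ℝ) 1, s u = c * (1 + p u) * Real.exp (∫ t in u..1, b t / t))
    (x : ℝ) (hx : 0 < x) :
    Tendsto (fun u => sSup ((fun v => |s v / s u - 1|) ''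
        Set.Icc (min (u * x) u) (max (u * x) u))) (𝓝[>] 0) (𝓝 0) :=
  slowly_varying_uniform_ratio_general c hc p b hbm hbb hp0 hb0 s hs x hx
end

section
/- Let γ > 0 and ρ < 0, and define Q(u) = (u^ρ − 1)^{−γ/ρ} for u ∈ (0,1) (the quantile function F^{-1}(1−u) of the Burr distribution F(y) = 1 − (y^{−ρ/γ} + 1)^{1/ρ}, y ≥ 0). Then for every x > 0: lim_{u→0⁺} (u^ρ − 1)·( (Q(ux) − Q(u))/(γ·Q(u)) − (x^{−γ} − 1)/γ ) = −(x^ρ − 1)·x^{−γ−ρ}/ρ (the expression being taken for u small enough that ux ∈ (0,1)). -/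
open Filter Topology Set

/-!
With `t = u ^ ρ - 1 → ∞` and `a = x ^ ρ`, one has `(u x) ^ ρ - 1 = t (a + (a - 1) / t)`, so
`Q (u x) / Q u = (a + (a - 1) / t) ^ β` with `β = -γ / ρ`, and `x ^ (-γ) = a ^ β`. The expression
is therefore `t ((a + (a - 1) / t) ^ β - a ^ β) / γ`, a difference quotient of `s ↦ s ^ β` at `a`
with step `(a - 1) / t → 0`, and it tends to `(a - 1) β a ^ (β - 1) / γ`.
-/

theorem HasDerivAt.tendsto_mul_sub_add_div {f : ℝ → ℝ} {f' a : ℝ} (hf : HasDerivAt f f' a)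
    (c : ℝ) {α : Type*} {l : Filter α} {t : α → ℝ} (ht : Tendsto t l atTop) :
    Tendsto (fun u => t u * (f (a + c / t u) - f a)) l (𝓝 (c * f')) := by
  have hline : HasDerivAt (fun h : ℝ => a + c * h) c 0 := by
    simpa using ((hasDerivAt_id (0 : ℝ)).const_mul c).const_add a
  have hg : HasDerivAt (fun h => f (a + c * h)) (f' * c) 0 := by
    apply HasDerivAt.comp (0 : ℝ) _ hline
    simpa using hf
  rw [mul_comm c]
  refine (hg.tendsto_slope_zero_right.comp (tendsto_inv_atTop_nhdsGT_zero.comp ht)).congr ?_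
  intro u
  simp [div_eq_mul_inv]

theorem rpow_mul_sub_one_rpow {u x : ℝ} (ρ β : ℝ) (hu : 0 ≤ u) (hx : 0 ≤ x)
    (ht : 0 < u ^ ρ - 1) (hs : 0 ≤ (u * x) ^ ρ - 1) :
    ((u * x) ^ ρ - 1) ^ β = (u ^ ρ - 1) ^ β * (x ^ ρ + (x ^ ρ - 1) / (u ^ ρ - 1)) ^ β := by
  have hsplit : (u * x) ^ ρ - 1 = (u ^ ρ - 1) * (x ^ ρ + (x ^ ρ - 1) / (u ^ ρ - 1)) := by
    rw [Real.mul_rpow hu hx]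
    field_simp
    ring
  rw [hsplit, Real.mul_rpow ht.le]
  rw [hsplit] at hs
  exact nonneg_of_mul_nonneg_right (by linarith) ht

theorem burr_second_order_expr_eq {γ ρ x u : ℝ} (hγ : γ ≠ 0) (hρ : ρ < 0)
    {Q : ℝ → ℝ} (hQ : ∀ u ∈ Set.Ioo (0:ℝ) 1, Q u = (u ^ ρ - 1) ^ (-γ / ρ))
    (hx : 0 < x) (hu : 0 < u) (hu1 : u < 1) (hux : u * x < 1) :
    (u ^ ρ - 1) * ((Q (u * x) - Q u) / (γ * Q u) - (x ^ (-γ) - 1) / γ) =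
      (u ^ ρ - 1) * ((x ^ ρ + (x ^ ρ - 1) / (u ^ ρ - 1)) ^ (-γ / ρ) - (x ^ ρ) ^ (-γ / ρ)) / γ := by
  have hux0 : 0 < u * x := mul_pos hu hx
  have ht : 0 < u ^ ρ - 1 := sub_pos.2 (Real.one_lt_rpow_of_pos_of_lt_one_of_neg hu hu1 hρ)
  have hs : 0 < (u * x) ^ ρ - 1 :=
    sub_pos.2 (Real.one_lt_rpow_of_pos_of_lt_one_of_neg hux0 hux hρ)
  have hxγ : (x ^ ρ) ^ (-γ / ρ) = x ^ (-γ) := by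
    rw [← Real.rpow_mul hx.le, mul_div_cancel₀ _ hρ.ne]
  rw [hQ _ ⟨hux0, hux⟩, rpow_mul_sub_one_rpow ρ _ hu.le hx.le ht hs.le, hQ u ⟨hu, hu1⟩, hxγ]
  have := Real.rpow_pos_of_pos ht (-γ / ρ)
  field_simp
  ring

/-- Second order condition for the Burr distribution quantile function. -/
theorem burr_second_order
    (γ ρ : ℝ) (hγ : 0 < γ) (hρ : ρ < 0)
    (Q : ℝ → ℝ) (hQ : ∀ u ∈ Set.Ioo (0:ℝ) 1, Q u = (u ^ ρ - 1) ^ (-γ / ρ))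
    (x : ℝ) (hx : 0 < x) :
    Tendsto (fun u => (u ^ ρ - 1) *
        ((Q (u * x) - Q u) / (γ * Q u) - (x ^ (-γ) - 1) / γ)) (𝓝[>] 0)
      (𝓝 (-(x ^ ρ - 1) * x ^ (-γ - ρ) / ρ)) := by
  have hT : Tendsto (fun u : ℝ => u ^ ρ - 1) (𝓝[>] 0) atTop :=
    tendsto_atTop_add_const_right _ _ (tendsto_rpow_neg_nhdsGT_zero hρ)
  have hderiv := Real.hasDerivAt_rpow_const (p := -γ / ρ) (Or.inl (Real.rpow_pos_of_pos hx ρ).ne')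
  have hvalue : (x ^ ρ - 1) * (-γ / ρ * (x ^ ρ) ^ (-γ / ρ - 1)) / γ =
      -(x ^ ρ - 1) * x ^ (-γ - ρ) / ρ := by
    rw [← Real.rpow_mul hx.le, mul_sub, mul_div_cancel₀ _ hρ.ne, mul_one]
    field_simp
  rw [← hvalue]
  refine ((hderiv.tendsto_mul_sub_add_div (x ^ ρ - 1) hT).div_const γ).congr' ?_
  have hsmall : ∀ᶠ u in 𝓝[>] (0 : ℝ), u < 1 ∧ u * x < 1 := by
    refine nhdsWithin_le_nhds ((eventually_lt_nhds one_pos).and ?_)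
    exact (continuous_mul_const x).tendsto' 0 0 (zero_mul x) |>.eventually_lt_const one_pos
  filter_upwards [self_mem_nhdsWithin, hsmall] with u (hu : 0 < u) ⟨hu1, hux⟩
  exact (burr_second_order_expr_eq hγ.ne' hρ hQ hx hu hu1 hux).symm
end

section
/- Let γ < 0 and ρ < 0, and define Q(u) = −(u^ρ − 1)^{−γ/ρ} for u ∈ (0,1) (the quantile function F^{-1}(1−u) of the reversed Burr distribution F(y) = 1 − ((−y)^{−ρ/γ} + 1)^{1/ρ}, y ≤ 0). Then for every x > 0: lim_{u→0⁺} u^ρ·( (Q(u) − Q(ux))/(γ·(u^ρ − 1)^{−γ/ρ}) − (x^{−γ} − 1)/γ ) = −x^{−γ}(1 − x^{−ρ})/ρ (the expression being taken for u small enough that ux ∈ (0,1)). -/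
open Filter Topology Set

/-!
Put `v = u ^ (-ρ)`, which tends to `0⁺`, and `c = -γ / ρ`. Since
`((u x) ^ ρ - 1) / (u ^ ρ - 1) = (x ^ ρ - v) / (1 - v)` and `x ^ (-γ) = (x ^ ρ) ^ c`,
the expression is `(g v - g 0) / (γ v)` for `g v = ((x ^ ρ - v) / (1 - v)) ^ c`,
so its limit is `g' 0 / γ`.
-/

lemma tendsto_rpow_nhdsGT_zero {p : ℝ} (hp : 0 < p) :
    Tendsto (fun u : ℝ => u ^ p) (𝓝[>] 0) (𝓝[>] 0) := by
  refine tendsto_nhdsWithin_iff.mpr ⟨?_, ?_⟩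
  · simpa [Real.zero_rpow hp.ne'] using
      (Real.continuousAt_rpow_const 0 p (Or.inr hp.le)).tendsto.mono_left nhdsWithin_le_nhds
  · filter_upwards [self_mem_nhdsWithin] with u hu using Real.rpow_pos_of_pos hu p

lemma hasDerivAt_rpow_sub_div_one_sub {a : ℝ} (ha : a ≠ 0) (c : ℝ) :
    HasDerivAt (fun v : ℝ => ((a - v) / (1 - v)) ^ c) ((a - 1) * c * a ^ (c - 1)) 0 := by
  have hq : HasDerivAt (fun v : ℝ => (a - v) / (1 - v)) (a - 1) 0 :=
    (((hasDerivAt_id' 0).const_sub a).div ((hasDerivAt_id' 0).const_sub 1)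
      (by norm_num)).congr_deriv (by ring)
  simpa using hq.rpow_const (p := c) (Or.inl (by simpa using ha))

lemma tendsto_rpow_sub_div_one_sub_slope {a p : ℝ} (ha : a ≠ 0) (hp : 0 < p) (c : ℝ) :
    Tendsto (fun u : ℝ => (((a - u ^ p) / (1 - u ^ p)) ^ c - a ^ c) / u ^ p) (𝓝[>] 0)
      (𝓝 ((a - 1) * c * a ^ (c - 1))) := by
  have hslope := (hasDerivAt_rpow_sub_div_one_sub ha c).tendsto_slope_zero_right
  refine (hslope.comp (tendsto_rpow_nhdsGT_zero hp)).congr fun u => ?_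
  simp [div_eq_inv_mul]

lemma rpow_mul_sub_one_div_rpow_sub_one {u x ρ : ℝ} (hu : 0 < u) (hx : 0 ≤ x)
    (huρ : u ^ ρ ≠ 1) :
    ((u * x) ^ ρ - 1) / (u ^ ρ - 1) = (x ^ ρ - u ^ (-ρ)) / (1 - u ^ (-ρ)) := by
  have hsub : u ^ ρ - 1 ≠ 0 := sub_ne_zero.mpr huρ
  rw [Real.mul_rpow hu.le hx, Real.rpow_neg hu.le]
  field_simp

/-- Second order condition for the reversed Burr distribution quantile function. -/
theorem reversed_burr_second_order
    (γ ρ : ℝ) (hγ : γ < 0) (hρ : ρ < 0)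
    (Q : ℝ → ℝ) (hQ : ∀ u ∈ Set.Ioo (0:ℝ) 1, Q u = -((u ^ ρ - 1) ^ (-γ / ρ)))
    (x : ℝ) (hx : 0 < x) :
    Tendsto (fun u => u ^ ρ *
        ((Q u - Q (u * x)) / (γ * (u ^ ρ - 1) ^ (-γ / ρ)) - (x ^ (-γ) - 1) / γ))
      (𝓝[>] 0) (𝓝 (-(x ^ (-γ)) * (1 - x ^ (-ρ)) / ρ)) := by
  set c := -γ / ρ with hc
  have hxρ : 0 < x ^ ρ := Real.rpow_pos_of_pos hx ρ
  have hxc : (x ^ ρ) ^ c = x ^ (-γ) := by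
    rw [← Real.rpow_mul hx.le, hc]; congr 1; field_simp [hρ.ne]
  have hval : (x ^ ρ - 1) * c * (x ^ ρ) ^ (c - 1) / γ = -(x ^ (-γ)) * (1 - x ^ (-ρ)) / ρ := by
    rw [Real.rpow_sub_one hxρ.ne', hxc, Real.rpow_neg hx.le ρ, hc]
    field_simp [hγ.ne, hρ.ne]
  rw [← hval, ← hxc]
  refine ((tendsto_rpow_sub_div_one_sub_slope hxρ.ne' (neg_pos.mpr hρ) c).div_const γ).congr' ?_
  filter_upwards [Ioo_mem_nhdsGT (show (0 : ℝ) < min 1 x⁻¹ by positivity)] with u ⟨hu0, hu⟩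
  have hu1 : u < 1 := hu.trans_le (min_le_left _ _)
  have hux : u * x < 1 :=
    (lt_mul_inv_iff₀ hx).mp <| (one_mul x⁻¹).symm ▸ hu.trans_le (min_le_right _ _)
  have huρ : 1 < u ^ ρ := Real.one_lt_rpow_of_pos_of_lt_one_of_neg hu0 hu1 hρ
  have huxρ : 1 < (u * x) ^ ρ := Real.one_lt_rpow_of_pos_of_lt_one_of_neg (by positivity) hux hρ
  rw [hQ u ⟨hu0, hu1⟩, hQ (u * x) ⟨by positivity, hux⟩,
    ← rpow_mul_sub_one_div_rpow_sub_one hu0 hx.le huρ.ne',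
    Real.div_rpow (by linarith) (by linarith), Real.rpow_neg hu0.le]
  have hA : 0 < (u ^ ρ - 1) ^ c := Real.rpow_pos_of_pos (by linarith) c
  field_simp
  ring
end

section
/- Let a > 0, b > 0, c > 0, and define Q(u) = ((u^{−1/c} − 1)/a)^{1/b} for u ∈ (0,1) (the quantile function F^{-1}(1−u) of the Singh-Maddala distribution F(y) = 1 − (1 + a y^b)^{−c}, y ≥ 0). Then for every x > 0: lim_{u→0⁺} (u^{−1/c} − 1)·( bc·(Q(ux) − Q(u))/Q(u) − bc·(x^{−1/(bc)} − 1) ) = c·(x^{−1/c} − 1)·x^{−1/(bc) + 1/c} (the expression being taken for u small enough that ux ∈ (0,1)). -/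
/-!
Put `T = u^(-1/c) - 1`, which tends to `∞` as `u → 0⁺`, and `t₀ = x^(-1/c)`. Then
`(ux)^(-1/c) - 1 = T · (t₀ + (t₀ - 1)/T)`, so `Q(ux)/Q(u) = f(t₀ + (t₀ - 1)/T)` with `f t = t^(1/b)`,
and `x^(-1/(bc)) = f(t₀)`. The expression is therefore `bc · T · (f(t₀ + (t₀ - 1)/T) - f(t₀))`,
a difference quotient of `f` at `t₀` with step `(t₀ - 1)/T`, which converges to `bc (t₀ - 1) f'(t₀)`.
-/

open Filter Topology Set

theorem HasDerivAt.tendsto_mul_sub_atTop {f : ℝ → ℝ} {f' t : ℝ} (hf : HasDerivAt f f' t)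
    (d : ℝ) : Tendsto (fun T => T * (f (t + d / T) - f t)) atTop (𝓝 (d * f')) := by
  have hline : HasDerivAt (fun s => t + d * s) d 0 := by
    simpa using ((hasDerivAt_id (0 : ℝ)).const_mul d).const_add t
  have hg : HasDerivAt (fun s => f (t + d * s)) (f' * d) 0 :=
    hf.comp_of_eq 0 hline (by simp)
  rw [mul_comm d]
  refine (hg.tendsto_slope_zero_right.comp tendsto_inv_atTop_nhdsGT_zero).congr' ?_
  filter_upwards [eventually_ne_atTop 0] with T hT
  simp [div_eq_mul_inv]

theorem tendsto_rpow_neg_sub_one_nhdsGT_zero {ρ : ℝ} (hρ : 0 < ρ) :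
    Tendsto (fun u : ℝ => u ^ (-ρ) - 1) (𝓝[>] 0) atTop :=
  tendsto_atTop_add_const_right _ _ (tendsto_rpow_neg_nhdsGT_zero (neg_neg_iff_pos.mpr hρ))

theorem rpow_neg_sub_one_pos {u ρ : ℝ} (hu₀ : 0 < u) (hu₁ : u < 1) (hρ : 0 < ρ) :
    0 < u ^ (-ρ) - 1 :=
  sub_pos.mpr (Real.one_lt_rpow_of_pos_of_lt_one_of_neg hu₀ hu₁ (neg_neg_iff_pos.mpr hρ))

theorem mul_rpow_neg_sub_one {u x : ℝ} (hu : 0 ≤ u) (hx : 0 ≤ x) (ρ : ℝ)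
    (hT : u ^ (-ρ) - 1 ≠ 0) :
    (u * x) ^ (-ρ) - 1 = (u ^ (-ρ) - 1) * (x ^ (-ρ) + (x ^ (-ρ) - 1) / (u ^ (-ρ) - 1)) := by
  rw [Real.mul_rpow hu hx]
  field_simp
  ring

theorem mul_rpow_neg_sub_one_div_rpow {a ρ u x : ℝ} (ha : 0 < a) (hρ : 0 < ρ) (hu₀ : 0 < u)
    (hu₁ : u < 1) (hx : 0 < x) (hux : u * x < 1) (p : ℝ) :
    (((u * x) ^ (-ρ) - 1) / a) ^ p =
      ((u ^ (-ρ) - 1) / a) ^ p * (x ^ (-ρ) + (x ^ (-ρ) - 1) / (u ^ (-ρ) - 1)) ^ p := by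
  have hT := rpow_neg_sub_one_pos hu₀ hu₁ hρ
  have hR : 0 ≤ x ^ (-ρ) + (x ^ (-ρ) - 1) / (u ^ (-ρ) - 1) := by
    have hux_pos := rpow_neg_sub_one_pos (mul_pos hu₀ hx) hux hρ
    rw [mul_rpow_neg_sub_one hu₀.le hx.le ρ hT.ne'] at hux_pos
    exact (pos_of_mul_pos_right hux_pos hT.le).le
  rw [mul_rpow_neg_sub_one hu₀.le hx.le ρ hT.ne', mul_div_right_comm,
    Real.mul_rpow (div_pos hT ha).le hR]

/-- Second order condition for the Singh-Maddala distribution quantile function. -/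
theorem singh_maddala_second_order
    (a b c : ℝ) (ha : 0 < a) (hb : 0 < b) (hc : 0 < c)
    (Q : ℝ → ℝ)
    (hQ : ∀ u ∈ Set.Ioo (0:ℝ) 1, Q u = ((u ^ (-(1 / c)) - 1) / a) ^ (1 / b))
    (x : ℝ) (hx : 0 < x) :
    Tendsto (fun u => (u ^ (-(1 / c)) - 1) *
        (b * c * (Q (u * x) - Q u) / Q u - b * c * (x ^ (-(1 / (b * c))) - 1)))
      (𝓝[>] 0)
      (𝓝 (c * (x ^ (-(1 / c)) - 1) * x ^ (-(1 / (b * c)) + 1 / c))) := by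
  have hρ : 0 < 1 / c := by positivity
  set t₀ := x ^ (-(1 / c))
  have ht₀ : 0 < t₀ := Real.rpow_pos_of_pos hx _
  have ht₀_rpow (p : ℝ) : t₀ ^ p = x ^ (-(1 / c) * p) := (Real.rpow_mul hx.le _ _).symm
  have hlim := (((Real.hasDerivAt_rpow_const (p := 1 / b) (Or.inl ht₀.ne')).tendsto_mul_sub_atTop
    (t₀ - 1)).comp (tendsto_rpow_neg_sub_one_nhdsGT_zero hρ)).const_mul (b * c)
  have hval : b * c * ((t₀ - 1) * (1 / b * t₀ ^ (1 / b - 1))) =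
      c * (t₀ - 1) * x ^ (-(1 / (b * c)) + 1 / c) := by
    have hexp : -(1 / c) * (1 / b - 1) = -(1 / (b * c)) + 1 / c := by field_simp; ring
    rw [ht₀_rpow, hexp]
    field_simp
  rw [← hval]
  refine hlim.congr' ?_
  filter_upwards [Ioo_mem_nhdsGT one_pos, Ioo_mem_nhdsGT (inv_pos.mpr hx)]
    with u ⟨hu₀, hu₁⟩ ⟨_, hux⟩
  rw [← one_div, lt_div_iff₀ hx] at hux
  have hQu : 0 < Q u := by
    rw [hQ u ⟨hu₀, hu₁⟩]
    exact Real.rpow_pos_of_pos (div_pos (rpow_neg_sub_one_pos hu₀ hu₁ hρ) ha) _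
  rw [Function.comp_apply, hQ (u * x) ⟨mul_pos hu₀ hx, hux⟩,
    mul_rpow_neg_sub_one_div_rpow ha hρ hu₀ hu₁ hx hux, ← hQ u ⟨hu₀, hu₁⟩, ht₀_rpow]
  field_simp
  ring
end

section
/- Let Φ(y) = (2π)^{−1/2} ∫_{−∞}^{y} e^{−t²/2} dt be the standard normal distribution function, and let q : (0,1) → ℝ be any function satisfying Φ(q(s)) = 1 − s for all s ∈ (0,1). Then lim_{s→0⁺} ( q(s)² − 2·log(1/s) + log log(1/s) + log(4π) ) = 0; equivalently, q(s) = (2 log(1/s))^{1/2}·( 1 − ( (1/2)log(4π) + (1/2)log log(1/s) + o(1) ) / (2 log(1/s)) ) as s → 0⁺. -/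
/-!
Let `G(y) = ∫_y^∞ e^{-t²/2} dt`, so that `s = G(q(s)) / √(2π)` and `q(s) → ∞` as `s → 0⁺`.
The Mills-ratio bounds `y / (1 + y²) · e^{-y²/2} ≤ G(y) ≤ e^{-y²/2} / y` give
`log G(y) = -y²/2 - log y + o(1)`, i.e. `L := log(1/s) = y²/2 + log y + ½ log(2π) + o(1)` with
`y = q(s)`. Then `2L/y² → 1`, so `log L = 2 log y - log 2 + o(1)`, and
`y² - 2L + log L = -log(2π) - log 2 + o(1) = -log(4π) + o(1)`.
-/

open Filter Topology Set MeasureTheory Real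

noncomputable def gaussianTail (y : ℝ) : ℝ := ∫ t in Ioi y, exp (-t ^ 2 / 2)

lemma hasDerivAt_exp_neg_sq_div_two (x : ℝ) :
    HasDerivAt (fun t : ℝ => exp (-t ^ 2 / 2)) (-x * exp (-x ^ 2 / 2)) x := by
  have h := ((hasDerivAt_pow 2 x).fun_neg.div_const 2).exp
  convert h using 1
  push_cast
  ring

lemma tendsto_exp_neg_sq_div_two_atTop :
    Tendsto (fun t : ℝ => exp (-t ^ 2 / 2)) atTop (𝓝 0) := by
  refine tendsto_exp_atBot.comp ?_
  simpa [neg_div] using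
    (tendsto_pow_atTop (α := ℝ) two_ne_zero).atTop_div_const (two_pos : (0 : ℝ) < 2)

lemma integrable_exp_neg_sq_div_two : Integrable (fun t : ℝ => exp (-t ^ 2 / 2)) := by
  convert integrable_exp_neg_mul_sq (b := 1 / 2) (by norm_num) using 2 with t
  ring_nf

lemma integral_exp_neg_sq_div_two : ∫ t : ℝ, exp (-t ^ 2 / 2) = √(2 * π) := by
  convert integral_gaussian (1 / 2) using 2
  · ring_nf
  · field_simp

lemma integral_Iic_add_gaussianTail (y : ℝ) :
    (∫ t in Iic y, exp (-t ^ 2 / 2)) + gaussianTail y = √(2 * π) := by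
  rw [gaussianTail, ← integral_exp_neg_sq_div_two]
  exact intervalIntegral.integral_Iic_add_Ioi integrable_exp_neg_sq_div_two.integrableOn
    integrable_exp_neg_sq_div_two.integrableOn

lemma gaussianTail_pos (y : ℝ) : 0 < gaussianTail y := by
  rw [gaussianTail, setIntegral_pos_iff_support_of_nonneg_ae
    (.of_forall fun t => (exp_pos _).le) integrable_exp_neg_sq_div_two.integrableOn]
  simp [Function.support, (exp_pos _).ne']

lemma gaussianTail_antitone : Antitone gaussianTail := fun _ _ hab =>
  setIntegral_mono_set integrable_exp_neg_sq_div_two.integrableOn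
    (.of_forall fun _ => (exp_pos _).le) (Ioi_subset_Ioi hab).eventuallyLE

lemma gaussianTail_le_exp_div (y : ℝ) (hy : 0 < y) : gaussianTail y ≤ exp (-y ^ 2 / 2) / y := by
  have hderiv : ∀ x ∈ Ici y,
      HasDerivAt (fun t => -exp (-t ^ 2 / 2)) (x * exp (-x ^ 2 / 2)) x := fun x _ => by
    simpa using (hasDerivAt_exp_neg_sq_div_two x).fun_neg
  have hnonneg : ∀ x ∈ Ioi y, 0 ≤ x * exp (-x ^ 2 / 2) :=
    fun x hx => mul_nonneg (hy.trans hx).le (exp_pos _).le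
  have hlim := tendsto_exp_neg_sq_div_two_atTop.neg
  -- On `t > y` the integrand is at most `t / y` times itself, and `t e^{-t²/2}` integrates exactly.
  calc gaussianTail y ≤ ∫ t in Ioi y, y⁻¹ * (t * exp (-t ^ 2 / 2)) := by
        refine setIntegral_mono_on integrable_exp_neg_sq_div_two.integrableOn
          ((integrableOn_Ioi_deriv_of_nonneg' hderiv hnonneg hlim).const_mul _)
          measurableSet_Ioi fun t ht => ?_
        rw [← mul_assoc, inv_mul_eq_div]
        exact le_mul_of_one_le_left (exp_pos _).le ((one_le_div hy).2 (le_of_lt ht))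
    _ = exp (-y ^ 2 / 2) / y := by
        rw [integral_const_mul, integral_Ioi_of_hasDerivAt_of_nonneg' hderiv hnonneg hlim]
        simp [div_eq_inv_mul]

lemma hasDerivAt_neg_div_one_add_sq_mul_exp (x : ℝ) :
    HasDerivAt (fun t => -(t / (1 + t ^ 2) * exp (-t ^ 2 / 2)))
      ((1 - 2 / (1 + x ^ 2) ^ 2) * exp (-x ^ 2 / 2)) x := by
  have hx : 1 + x ^ 2 ≠ 0 := by positivity
  refine ((((hasDerivAt_id x).div ((hasDerivAt_pow 2 x).const_add 1) hx).mul
    (hasDerivAt_exp_neg_sq_div_two x)).fun_neg).congr_deriv ?_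
  simp only [Pi.div_apply, id]
  field_simp
  push_cast
  ring

lemma abs_one_sub_two_div_one_add_sq_sq_le (x : ℝ) : |1 - 2 / (1 + x ^ 2) ^ 2| ≤ 1 := by
  have h1 : 1 ≤ (1 + x ^ 2) ^ 2 := one_le_pow₀ (by nlinarith)
  have h2 : 2 / (1 + x ^ 2) ^ 2 ≤ 2 := div_le_self zero_le_two h1
  rw [abs_le]
  constructor <;> nlinarith [div_nonneg zero_le_two (zero_le_one.trans h1)]

lemma div_one_add_sq_mul_exp_le_gaussianTail (y : ℝ) :
    y / (1 + y ^ 2) * exp (-y ^ 2 / 2) ≤ gaussianTail y := by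
  have hint : Integrable fun t : ℝ => (1 - 2 / (1 + t ^ 2) ^ 2) * exp (-t ^ 2 / 2) := by
    refine integrable_exp_neg_sq_div_two.mono' (by fun_prop) (.of_forall fun t => ?_)
    rw [norm_mul, norm_of_nonneg (exp_pos _).le]
    exact mul_le_of_le_one_left (exp_pos _).le (abs_one_sub_two_div_one_add_sq_sq_le t)
  have hlim : Tendsto (fun t => -(t / (1 + t ^ 2) * exp (-t ^ 2 / 2))) atTop (𝓝 0) := by
    refine squeeze_zero_norm (fun t => ?_) tendsto_exp_neg_sq_div_two_atTop
    have h1 : 0 < 1 + t ^ 2 := by positivity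
    rw [norm_neg, norm_mul, norm_of_nonneg (exp_pos _).le, norm_div, norm_of_nonneg h1.le]
    refine mul_le_of_le_one_left (exp_pos _).le ((div_le_one h1).2 ?_)
    rw [Real.norm_eq_abs]
    nlinarith [sq_abs t, abs_nonneg t]
  calc y / (1 + y ^ 2) * exp (-y ^ 2 / 2)
      = ∫ t in Ioi y, (1 - 2 / (1 + t ^ 2) ^ 2) * exp (-t ^ 2 / 2) := by
        rw [integral_Ioi_of_hasDerivAt_of_tendsto'
          (fun x _ => hasDerivAt_neg_div_one_add_sq_mul_exp x) hint.integrableOn hlim]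
        ring
    _ ≤ gaussianTail y := by
        refine setIntegral_mono hint.integrableOn integrable_exp_neg_sq_div_two.integrableOn
          fun t => mul_le_of_le_one_left (exp_pos _).le (sub_le_self _ (by positivity))

lemma tendsto_gaussianTail_div_atTop :
    Tendsto (fun y => gaussianTail y / (exp (-y ^ 2 / 2) / y)) atTop (𝓝 1) := by
  have hlow : Tendsto (fun y : ℝ => 1 - (1 + y ^ 2)⁻¹) atTop (𝓝 1) := by
    simpa using ((tendsto_atTop_add_const_left _ 1
      (tendsto_pow_atTop (α := ℝ) two_ne_zero)).inv_tendsto_atTop).const_sub 1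
  refine tendsto_of_tendsto_of_tendsto_of_le_of_le' hlow tendsto_const_nhds ?_ ?_
  all_goals filter_upwards [eventually_gt_atTop 0] with y hy
  all_goals have hpos : 0 < exp (-y ^ 2 / 2) / y := div_pos (exp_pos _) hy
  · rw [le_div_iff₀ hpos]
    refine le_of_eq_of_le ?_ (div_one_add_sq_mul_exp_le_gaussianTail y)
    field_simp
    ring
  · exact (div_le_one hpos).2 (gaussianTail_le_exp_div y hy)

lemma tendsto_log_gaussianTail_add_sq_div_two_add_log :
    Tendsto (fun y => log (gaussianTail y) + y ^ 2 / 2 + log y) atTop (𝓝 0) := by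
  have h := ((continuousAt_log one_ne_zero).tendsto.comp tendsto_gaussianTail_div_atTop)
  rw [log_one] at h
  refine h.congr' ?_
  filter_upwards [eventually_gt_atTop 0] with y hy
  rw [Function.comp_apply, log_div (gaussianTail_pos y).ne' (div_pos (exp_pos _) hy).ne',
    log_div (exp_pos _).ne' hy.ne', log_exp]
  ring

lemma tendsto_atTop_of_antitone_of_comp_eq {g q : ℝ → ℝ} (hg : Antitone g) (hpos : ∀ y, 0 < g y)
    (hq : ∀ᶠ s in 𝓝[>] 0, g (q s) = s) : Tendsto q (𝓝[>] 0) atTop := by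
  refine tendsto_atTop.2 fun M => ?_
  filter_upwards [hq, Ioo_mem_nhdsGT (hpos M)] with s hs hsM
  by_contra! h
  linarith [hg h.le, hsM.2]

lemma tendsto_sq_sub_two_mul_add_log {α : Type*} {l : Filter α} {y L : α → ℝ} {c : ℝ}
    (hy : Tendsto y l atTop)
    (hL : Tendsto (fun a => L a - (y a ^ 2 / 2 + log (y a) + c)) l (𝓝 0)) :
    Tendsto (fun a => y a ^ 2 - 2 * L a + log (L a)) l (𝓝 (-(2 * c) - log 2)) := by
  set ε := fun a => L a - (y a ^ 2 / 2 + log (y a) + c)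
  have hinv : Tendsto (fun a => (y a ^ 2)⁻¹) l (𝓝 0) :=
    (tendsto_pow_atTop two_ne_zero).inv_tendsto_atTop.comp hy
  have hlog : Tendsto (fun a => log (y a) / y a ^ 2) l (𝓝 0) := by
    have h := ((tendsto_pow_log_div_mul_add_atTop 1 0 1 one_ne_zero).mul
      tendsto_inv_atTop_zero).comp hy
    simp only [pow_one, one_mul, add_zero, mul_zero] at h
    exact h.congr fun a => by simp only [Function.comp_apply]; ring
  have hratio : Tendsto (fun a => 2 * L a / y a ^ 2) l (𝓝 1) := by
    have h := ((hlog.const_mul 2).add ((hinv.const_mul (2 * c)).add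
      ((hL.mul hinv).const_mul 2))).const_add 1
    simp only [mul_zero, add_zero] at h
    refine h.congr' ?_
    filter_upwards [hy.eventually_gt_atTop 0] with a ha
    have : y a ≠ 0 := ha.ne'
    simp only [ε]
    field_simp
    ring
  -- `log L = 2 log y - log 2 + log (2L / y²)`, so the quantity is `-(2c) - log 2 - 2ε + log (2L / y²)`.
  have h := ((hL.const_mul 2).neg.add
    ((continuousAt_log one_ne_zero).tendsto.comp hratio)).const_add (-(2 * c) - log 2)
  simp only [mul_zero, neg_zero, log_one, add_zero] at h
  refine h.congr' ?_
  filter_upwards [hy.eventually_gt_atTop 0, hratio.eventually (lt_mem_nhds one_pos)] with a ha hr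
  have hL0 : 0 < L a := by
    have h2L := mul_pos hr (pow_pos ha 2)
    rw [div_mul_cancel₀ _ (by positivity)] at h2L
    linarith
  simp only [Function.comp_apply, ε]
  rw [log_div (by positivity) (by positivity), log_mul two_ne_zero hL0.ne', log_pow]
  push_cast
  ring

/-- Asymptotic expansion of the standard normal upper quantile:
`q(s)² = 2 log(1/s) − log log(1/s) − log(4π) + o(1)` as `s → 0⁺`. -/
theorem normal_upper_quantile_expansion
    (Φ : ℝ → ℝ)
    (hΦ : ∀ y : ℝ, Φ y = (2 * Real.pi) ^ (-(1/2) : ℝ) * ∫ t in Set.Iic y, Real.exp (-t ^ 2 / 2))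
    (q : ℝ → ℝ)
    (hq : ∀ s ∈ Set.Ioo (0:ℝ) 1, Φ (q s) = 1 - s) :
    Tendsto (fun s => (q s) ^ 2 - 2 * Real.log (1 / s)
        + Real.log (Real.log (1 / s)) + Real.log (4 * Real.pi)) (𝓝[>] 0) (𝓝 0) := by
  have hsqrt : 0 < √(2 * π) := by positivity
  have htail : ∀ᶠ s in 𝓝[>] 0, gaussianTail (q s) / √(2 * π) = s := by
    filter_upwards [Ioo_mem_nhdsGT one_pos] with s hs
    have h := hq s hs
    rw [hΦ, rpow_neg (by positivity), ← sqrt_eq_rpow, inv_mul_eq_div, div_eq_iff hsqrt.ne'] at h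
    rw [div_eq_iff hsqrt.ne']
    linarith [integral_Iic_add_gaussianTail (q s)]
  have hqtop : Tendsto q (𝓝[>] 0) atTop :=
    tendsto_atTop_of_antitone_of_comp_eq (fun _ _ h => div_le_div_of_nonneg_right
      (gaussianTail_antitone h) hsqrt.le) (fun y => div_pos (gaussianTail_pos y) hsqrt) htail
  have hL : Tendsto (fun s => log (1 / s) - (q s ^ 2 / 2 + log (q s) + log (2 * π) / 2))
      (𝓝[>] 0) (𝓝 0) := by
    have h := (tendsto_log_gaussianTail_add_sq_div_two_add_log.comp hqtop).neg
    rw [neg_zero] at h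
    refine h.congr' ?_
    filter_upwards [htail, self_mem_nhdsWithin] with s hs (hs0 : 0 < s)
    rw [div_eq_iff hsqrt.ne'] at hs
    have hlog := congrArg log hs
    rw [log_mul hs0.ne' hsqrt.ne', log_sqrt (by positivity)] at hlog
    rw [Function.comp_apply, one_div, log_inv]
    linarith
  convert (tendsto_sq_sub_two_mul_add_log hqtop hL).add_const (log (4 * π)) using 2
  rw [show (4 : ℝ) * π = 2 * (2 * π) by ring,
    log_mul (x := 2) (y := 2 * π) two_ne_zero (by positivity)]
  ring
end
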